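/- Let 1 < p < ∞ and define V_p(ξ) = (1+|ξ|²)^((p-2)/4) ξ for ξ ∈ ℝᵏ. Then there exists a constant c = c(k,p) > 0 such that for all ξ, η ∈ ℝᵏ with ξ ≠ η, c⁻¹ (1+|ξ|²+|η|²)^((p-2)/2) ≤ |V_p(ξ) - V_p(η)|² / |ξ-η|² ≤ c (1+|ξ|²+|η|²)^((p-2)/2). -/

import Mathlib

/-!
On the line, `t ↦ (1 + t²)^((p-2)/4) t` has derivative between `min 1 (p/2)` and `max 1 (p/2)`
times `(1 + t²)^((p-2)/4)`. For `|y| ≤ x` and `τ ∈ [x/2, x]`, `1 + τ²` lies in `[M/8, M]` with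
`M = 1 + x² + y²`, so the mean value theorem gives the estimate when `x/2 ≤ y`; when `y < x/2`,
the difference is squeezed between the one over `[x/2, x]` and `2 · (1 + x²)^((p-2)/4) x`
by monotonicity and oddness.

For vectors, both `‖V ξ - V η‖²` and `‖ξ - η‖²` are affine in `⟪ξ, η⟫ ∈ [-‖ξ‖‖η‖, ‖ξ‖‖η‖]`,
and at the two endpoints they are the one-dimensional quantities for `(‖ξ‖, ‖η‖)` and
`(‖ξ‖, -‖η‖)`.
-/

open Real Set

noncomputable def scalarVp (p t : ℝ) : ℝ := (1 + t ^ 2) ^ ((p - 2) / 4) * t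

lemma scalarVp_neg (p t : ℝ) : scalarVp p (-t) = -scalarVp p t := by
  simp [scalarVp]

lemma rpow_eq_rpow_sub_one_mul {x : ℝ} (hx : x ≠ 0) (y : ℝ) : x ^ y = x ^ (y - 1) * x := by
  rw [← rpow_add_one hx, sub_add_cancel]

lemma hasDerivAt_scalarVp (p t : ℝ) :
    HasDerivAt (scalarVp p) ((1 + t ^ 2) ^ ((p - 2) / 4 - 1) * (1 + p / 2 * t ^ 2)) t := by
  have hbase : HasDerivAt (fun s : ℝ => 1 + s ^ 2) (2 * t) t := by
    simpa using (hasDerivAt_pow 2 t).const_add 1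
  refine ((hbase.rpow_const (p := (p - 2) / 4) (Or.inl (by positivity))).mul
    (hasDerivAt_id t)).congr_deriv ?_
  rw [rpow_eq_rpow_sub_one_mul (by positivity : 1 + t ^ 2 ≠ 0) ((p - 2) / 4), id]
  ring

lemma min_mul_rpow_le_deriv_scalarVp (p t : ℝ) :
    min 1 (p / 2) * (1 + t ^ 2) ^ ((p - 2) / 4)
      ≤ (1 + t ^ 2) ^ ((p - 2) / 4 - 1) * (1 + p / 2 * t ^ 2) := by
  rw [rpow_eq_rpow_sub_one_mul (by positivity : 1 + t ^ 2 ≠ 0) ((p - 2) / 4), mul_left_comm]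
  gcongr
  rcases min_cases 1 (p / 2) with ⟨h, h'⟩ | ⟨h, h'⟩ <;> rw [h] <;> nlinarith [sq_nonneg t]

lemma deriv_scalarVp_le_max_mul_rpow (p t : ℝ) :
    (1 + t ^ 2) ^ ((p - 2) / 4 - 1) * (1 + p / 2 * t ^ 2)
      ≤ max 1 (p / 2) * (1 + t ^ 2) ^ ((p - 2) / 4) := by
  rw [rpow_eq_rpow_sub_one_mul (by positivity : 1 + t ^ 2 ≠ 0) ((p - 2) / 4), mul_left_comm]
  gcongr
  rcases max_cases 1 (p / 2) with ⟨h, h'⟩ | ⟨h, h'⟩ <;> rw [h] <;> nlinarith [sq_nonneg t]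

lemma strictMono_scalarVp {p : ℝ} (hp : 0 < p) : StrictMono (scalarVp p) := by
  refine strictMono_of_deriv_pos fun t => ?_
  rw [(hasDerivAt_scalarVp p t).deriv]
  exact lt_of_lt_of_le (by positivity) (min_mul_rpow_le_deriv_scalarVp p t)

lemma rpow_mem_Icc_of_div_le_of_le {K M u : ℝ} (β : ℝ) (hK : 1 ≤ K) (hM : 0 < M)
    (hMu : M / K ≤ u) (huM : u ≤ M) :
    M ^ β / K ^ |β| ≤ u ^ β ∧ u ^ β ≤ K ^ |β| * M ^ β := by
  have hu : 0 < u := lt_of_lt_of_le (by positivity) hMu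
  have hK1 : 1 ≤ K ^ |β| := one_le_rpow hK (abs_nonneg β)
  have hMβ : 0 < M ^ β := by positivity
  rcases le_total 0 β with hβ | hβ
  · rw [abs_of_nonneg hβ]
    constructor
    · calc M ^ β / K ^ β = (M / K) ^ β := (div_rpow hM.le (by positivity) β).symm
        _ ≤ u ^ β := by gcongr
    · calc u ^ β ≤ M ^ β := by gcongr
        _ ≤ K ^ β * M ^ β := le_mul_of_one_le_left hMβ.le (by rwa [abs_of_nonneg hβ] at hK1)
  · rw [abs_of_nonpos hβ]
    constructor
    · calc M ^ β / K ^ (-β) ≤ M ^ β := div_le_self hMβ.le (by rwa [abs_of_nonpos hβ] at hK1)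
        _ ≤ u ^ β := rpow_le_rpow_of_nonpos hu huM hβ
    · calc u ^ β ≤ (M / K) ^ β := rpow_le_rpow_of_nonpos (by positivity) hMu hβ
        _ = K ^ (-β) * M ^ β := by
          rw [div_rpow hM.le (by positivity), rpow_neg (by positivity)]; ring

lemma scalarVp_sub_bounds_of_forall_mem_Ioo {p M a b : ℝ} (hp : 0 ≤ p) (hM : 0 < M)
    (hab : a ≤ b)
    (h : ∀ τ ∈ Ioo a b, M / 8 ≤ 1 + τ ^ 2 ∧ 1 + τ ^ 2 ≤ M) :
    min 1 (p / 2) / 8 ^ |(p - 2) / 4| * M ^ ((p - 2) / 4) * (b - a)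
        ≤ scalarVp p b - scalarVp p a ∧
      scalarVp p b - scalarVp p a
        ≤ max 1 (p / 2) * 8 ^ |(p - 2) / 4| * M ^ ((p - 2) / 4) * (b - a) := by
  rcases hab.eq_or_lt with rfl | hab
  · simp
  obtain ⟨τ, hτ, hslope⟩ := exists_hasDerivAt_eq_slope (scalarVp p) _ hab
    (fun t _ => (hasDerivAt_scalarVp p t).continuousAt.continuousWithinAt)
    (fun t _ => hasDerivAt_scalarVp p t)
  have hsub : scalarVp p b - scalarVp p a
      = (1 + τ ^ 2) ^ ((p - 2) / 4 - 1) * (1 + p / 2 * τ ^ 2) * (b - a) := by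
    rw [hslope, div_mul_cancel₀ _ (sub_pos.mpr hab).ne']
  obtain ⟨hlow, hupp⟩ := rpow_mem_Icc_of_div_le_of_le ((p - 2) / 4) (by norm_num : (1 : ℝ) ≤ 8)
    hM (h τ hτ).1 (h τ hτ).2
  have hba : 0 ≤ b - a := (sub_pos.mpr hab).le
  rw [hsub]
  constructor
  · calc min 1 (p / 2) / 8 ^ |(p - 2) / 4| * M ^ ((p - 2) / 4) * (b - a)
        = min 1 (p / 2) * (M ^ ((p - 2) / 4) / 8 ^ |(p - 2) / 4|) * (b - a) := by ring
      _ ≤ min 1 (p / 2) * (1 + τ ^ 2) ^ ((p - 2) / 4) * (b - a) := by gcongr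
      _ ≤ _ := mul_le_mul_of_nonneg_right (min_mul_rpow_le_deriv_scalarVp p τ) hba
  · calc _ ≤ max 1 (p / 2) * (1 + τ ^ 2) ^ ((p - 2) / 4) * (b - a) :=
          mul_le_mul_of_nonneg_right (deriv_scalarVp_le_max_mul_rpow p τ) hba
      _ ≤ max 1 (p / 2) * (8 ^ |(p - 2) / 4| * M ^ ((p - 2) / 4)) * (b - a) := by gcongr
      _ = _ := by ring

lemma exists_scalarVp_sub_bounds_of_abs_le {p : ℝ} (hp : 0 < p) :
    ∃ C > 0, ∀ x y : ℝ, |y| ≤ x →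
      C⁻¹ * (1 + x ^ 2 + y ^ 2) ^ ((p - 2) / 4) * (x - y) ≤ scalarVp p x - scalarVp p y ∧
      scalarVp p x - scalarVp p y ≤ C * (1 + x ^ 2 + y ^ 2) ^ ((p - 2) / 4) * (x - y) := by
  set m := min 1 (p / 2)
  set K : ℝ := 8 ^ |(p - 2) / 4|
  have hm : 0 < m := lt_min one_pos (by linarith)
  have hm1 : m ≤ 1 := min_le_left _ _
  have hK : 1 ≤ K := one_le_rpow (by norm_num) (abs_nonneg _)
  have hMx : 1 ≤ max 1 (p / 2) := le_max_left _ _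
  refine ⟨4 * max 1 (p / 2) * K / m, by positivity, fun x y hyx => ?_⟩
  set C := 4 * max 1 (p / 2) * K / m
  have hCm : C⁻¹ ≤ m / K / 4 :=
    calc C⁻¹ = m / K / 4 / max 1 (p / 2) := by simp only [C]; field_simp
      _ ≤ m / K / 4 := div_le_self (by positivity) hMx
  have hCMx : max 1 (p / 2) * K ≤ C := by
    rw [le_div_iff₀ hm]
    nlinarith [mul_le_mul_of_nonneg_left hm1 (by positivity : 0 ≤ max 1 (p / 2) * K)]
  have hC4 : 4 * K ≤ C := by
    rw [le_div_iff₀ hm]; nlinarith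
  obtain ⟨hyx', hxy⟩ := abs_le.mp hyx
  set M := 1 + x ^ 2 + y ^ 2 with hMdef
  have hM : 0 < M := by positivity
  have hx2 : M / 8 ≤ 1 + x ^ 2 ∧ 1 + x ^ 2 ≤ M := by
    constructor <;> nlinarith [sq_nonneg y]
  have hnear : ∀ a b, x / 2 ≤ a → a ≤ b → b ≤ x →
      m / K * M ^ ((p - 2) / 4) * (b - a) ≤ scalarVp p b - scalarVp p a ∧
      scalarVp p b - scalarVp p a ≤ max 1 (p / 2) * K * M ^ ((p - 2) / 4) * (b - a) :=
    fun a b hxa hab hbx => scalarVp_sub_bounds_of_forall_mem_Ioo hp.le hM hab fun τ hτ => by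
      constructor <;> nlinarith [hτ.1, hτ.2]
  rcases le_or_gt (x / 2) y with hclose | hfar
  · obtain ⟨hlow, hupp⟩ := hnear y x hclose hxy le_rfl
    constructor
    · calc _ ≤ m / K * M ^ ((p - 2) / 4) * (x - y) := by
            gcongr; exact hCm.trans (div_le_self (by positivity) (by norm_num))
        _ ≤ _ := hlow
    · exact hupp.trans (by gcongr)
  · have hmono := (strictMono_scalarVp hp).monotone
    constructor
    · obtain ⟨hlow, -⟩ := hnear (x / 2) x le_rfl (by linarith) le_rfl
      calc C⁻¹ * M ^ ((p - 2) / 4) * (x - y)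
          ≤ m / K / 4 * M ^ ((p - 2) / 4) * (2 * x) := by gcongr; linarith
        _ = m / K * M ^ ((p - 2) / 4) * (x - x / 2) := by ring
        _ ≤ scalarVp p x - scalarVp p (x / 2) := hlow
        _ ≤ scalarVp p x - scalarVp p y := by linarith [hmono hfar.le]
    · have hfx := (rpow_mem_Icc_of_div_le_of_le ((p - 2) / 4) (by norm_num) hM hx2.1 hx2.2).2
      calc scalarVp p x - scalarVp p y
          ≤ scalarVp p x - scalarVp p (-x) := by linarith [hmono hyx']
        _ = 2 * (1 + x ^ 2) ^ ((p - 2) / 4) * x := by rw [scalarVp_neg, scalarVp]; ring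
        _ ≤ 2 * (8 ^ |(p - 2) / 4| * M ^ ((p - 2) / 4)) * (2 * (x - y)) := by
          gcongr <;> linarith
        _ = 4 * K * M ^ ((p - 2) / 4) * (x - y) := by ring
        _ ≤ C * M ^ ((p - 2) / 4) * (x - y) := by gcongr

lemma exists_scalarVp_sub_sq_bounds {p : ℝ} (hp : 0 < p) :
    ∃ C > 0, ∀ x y : ℝ,
      C⁻¹ * (1 + x ^ 2 + y ^ 2) ^ ((p - 2) / 2) * (x - y) ^ 2
        ≤ (scalarVp p x - scalarVp p y) ^ 2 ∧
      (scalarVp p x - scalarVp p y) ^ 2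
        ≤ C * (1 + x ^ 2 + y ^ 2) ^ ((p - 2) / 2) * (x - y) ^ 2 := by
  obtain ⟨C, hC, hbounds⟩ := exists_scalarVp_sub_bounds_of_abs_le hp
  refine ⟨C ^ 2, by positivity, fun x y => ?_⟩
  wlog hyx : |y| ≤ |x| generalizing x y
  · have := this y x (le_of_not_ge hyx)
    rwa [add_right_comm, ← neg_sub x, ← neg_sub (scalarVp p x), neg_sq, neg_sq] at this
  wlog hx : 0 ≤ x generalizing x y
  · have := this (-x) (-y) (by simpa using hyx) (by linarith)
    rwa [scalarVp_neg, scalarVp_neg, neg_sq, neg_sq, ← neg_sub', ← neg_sub', neg_sq, neg_sq]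
      at this
  rw [abs_of_nonneg hx] at hyx
  obtain ⟨hlow, hupp⟩ := hbounds x y hyx
  have hsq : ∀ c : ℝ, c ^ 2 * (1 + x ^ 2 + y ^ 2) ^ ((p - 2) / 2) * (x - y) ^ 2
      = (c * (1 + x ^ 2 + y ^ 2) ^ ((p - 2) / 4) * (x - y)) ^ 2 := fun c => by
    rw [mul_pow, mul_pow, ← rpow_mul_natCast (by positivity)]
    congr 3; push_cast; ring
  have hL : 0 ≤ C⁻¹ * (1 + x ^ 2 + y ^ 2) ^ ((p - 2) / 4) * (x - y) := by
    have : 0 ≤ x - y := by linarith [le_abs_self y]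
    positivity
  rw [← inv_pow, hsq, hsq]
  exact ⟨pow_le_pow_left₀ hL hlow 2, pow_le_pow_left₀ (hL.trans hlow) hupp 2⟩

lemma mul_norm_smul_sub_smul_sq_le {E : Type*} [NormedAddCommGroup E] [InnerProductSpace ℝ E]
    (x y : E) {A B C D L₁ L₂ : ℝ}
    (hsub : L₁ * (A * ‖x‖ - B * ‖y‖) ^ 2 ≤ L₂ * (C * ‖x‖ - D * ‖y‖) ^ 2)
    (hadd : L₁ * (A * ‖x‖ + B * ‖y‖) ^ 2 ≤ L₂ * (C * ‖x‖ + D * ‖y‖) ^ 2) :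
    L₁ * ‖A • x - B • y‖ ^ 2 ≤ L₂ * ‖C • x - D • y‖ ^ 2 := by
  have hexpand : ∀ a b : ℝ,
      ‖a • x - b • y‖ ^ 2 = a ^ 2 * ‖x‖ ^ 2 + b ^ 2 * ‖y‖ ^ 2 - 2 * (a * b) * inner ℝ x y := by
    intro a b
    rw [norm_sub_sq_real, real_inner_smul_left, real_inner_smul_right, norm_smul, norm_smul,
      norm_eq_abs, norm_eq_abs, mul_pow, mul_pow, sq_abs, sq_abs]
    ring
  obtain ⟨hs₁, hs₂⟩ := abs_le.mp (abs_real_inner_le_norm x y)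
  rw [hexpand, hexpand]
  rcases le_total 0 (L₂ * (C * D) - L₁ * (A * B)) with hγ | hγ
  · nlinarith [mul_le_mul_of_nonneg_left hs₂ hγ]
  · nlinarith [mul_le_mul_of_nonpos_left hs₁ hγ]

/-- Lemma 2.1 (Giusti 8.3): comparison estimates for the auxiliary function
`V_p(ξ) = (1+|ξ|²)^((p-2)/4) ξ`. -/
theorem Vp_comparison (k : ℕ) (p : ℝ) (hp₁ : 1 < p) :
    ∃ c : ℝ, 0 < c ∧ ∀ ξ η : EuclideanSpace ℝ (Fin k), ξ ≠ η →
      c⁻¹ * (1 + ‖ξ‖ ^ 2 + ‖η‖ ^ 2) ^ ((p - 2) / 2)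
        ≤ ‖((1 + ‖ξ‖ ^ 2) ^ ((p - 2) / 4)) • ξ - ((1 + ‖η‖ ^ 2) ^ ((p - 2) / 4)) • η‖ ^ 2
            / ‖ξ - η‖ ^ 2 ∧
      ‖((1 + ‖ξ‖ ^ 2) ^ ((p - 2) / 4)) • ξ - ((1 + ‖η‖ ^ 2) ^ ((p - 2) / 4)) • η‖ ^ 2
            / ‖ξ - η‖ ^ 2
        ≤ c * (1 + ‖ξ‖ ^ 2 + ‖η‖ ^ 2) ^ ((p - 2) / 2) := by
  obtain ⟨c, hc, hbounds⟩ := exists_scalarVp_sub_sq_bounds (p := p) (by linarith)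
  refine ⟨c, hc, fun ξ η hne => ?_⟩
  have hdist : 0 < ‖ξ - η‖ ^ 2 := pow_pos (norm_pos_iff.mpr (sub_ne_zero.mpr hne)) 2
  obtain ⟨hsub_low, hsub_upp⟩ := hbounds ‖ξ‖ ‖η‖
  obtain ⟨hadd_low, hadd_upp⟩ := hbounds ‖ξ‖ (-‖η‖)
  rw [scalarVp_neg, neg_sq, sub_neg_eq_add, sub_neg_eq_add] at hadd_low hadd_upp
  simp only [scalarVp] at hsub_low hsub_upp hadd_low hadd_upp
  rw [le_div_iff₀ hdist, div_le_iff₀ hdist]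
  constructor
  · simpa using mul_norm_smul_sub_smul_sq_le ξ η (A := 1) (B := 1) (L₂ := 1)
      (by simpa using hsub_low) (by simpa using hadd_low)
  · simpa using mul_norm_smul_sub_smul_sq_le ξ η (C := 1) (D := 1) (L₁ := 1)
      (by simpa using hsub_upp) (by simpa using hadd_upp)
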